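/- arXiv:1701.08584 — 4 statements merged into one kernel-verified Lean document; each statement's English description precedes it below -/
import Mathlib

section
/- For every 0 < α < 1 there exists a positive integer M = M(n, α) such that the boundary ∂C of any convex set C ⊂ ℝⁿ can be written as a union of M sets, each of which is (n−1, α)-planar. -/
open Metric Set Filter
open scoped RealInnerProductSpace

noncomputable def projV {n : ℕ} (V : Submodule ℝ (EuclideanSpace ℝ (Fin n)))
    (x : EuclideanSpace ℝ (Fin n)) : EuclideanSpace ℝ (Fin n) :=
  (V.orthogonalProjectionOnto x : EuclideanSpace ℝ (Fin n))

/-- `A` is `(V, α)`-planar: `A ⊆ X(x, V, α)` for every `x ∈ A`. -/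
def IsPlanar {n : ℕ} (V : Submodule ℝ (EuclideanSpace ℝ (Fin n))) (α : ℝ)
    (A : Set (EuclideanSpace ℝ (Fin n))) : Prop :=
  ∀ x ∈ A, ∀ y ∈ A, ‖projV Vᗮ (y - x)‖ ≤ α * ‖y - x‖

/-- The open half-space `H(x, θ) = {y : (y - x)·θ > 0}`. -/
def HS {n : ℕ} (x θ : EuclideanSpace ℝ (Fin n)) : Set (EuclideanSpace ℝ (Fin n)) :=
  {y | 0 < ⟪y - x, θ⟫}

lemma finrank_orth_span_unit {n : ℕ} {t : EuclideanSpace ℝ (Fin n)} (ht : ‖t‖ = 1) :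
    Module.finrank ℝ ((ℝ ∙ t)ᗮ : Submodule ℝ (EuclideanSpace ℝ (Fin n))) = n - 1 := by
  have ht0 : t ≠ 0 := by intro h; rw [h, norm_zero] at ht; norm_num at ht
  have h1 : Module.finrank ℝ (ℝ ∙ t : Submodule ℝ (EuclideanSpace ℝ (Fin n))) = 1 :=
    finrank_span_singleton ht0
  have h2 := Submodule.finrank_add_finrank_orthogonal
    (ℝ ∙ t : Submodule ℝ (EuclideanSpace ℝ (Fin n)))
  rw [h1, finrank_euclideanSpace_fin] at h2
  omega

lemma norm_projV_orth_span {n : ℕ} {t : EuclideanSpace ℝ (Fin n)} (ht : ‖t‖ = 1)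
    (w : EuclideanSpace ℝ (Fin n)) : ‖projV ((ℝ ∙ t)ᗮ)ᗮ w‖ = |⟪t, w⟫| := by
  rw [Submodule.orthogonal_orthogonal]
  unfold projV
  rw [Submodule.coe_orthogonalProjectionOnto_apply, Submodule.starProjection_unit_singleton ℝ ht, norm_smul, ht]
  simp [Real.norm_eq_abs]

lemma exists_hyperplane (n : ℕ) :
    ∃ V : Submodule ℝ (EuclideanSpace ℝ (Fin n)), Module.finrank ℝ V = n - 1 := by
  cases n with
  | zero => exact ⟨⊥, by simp⟩
  | succ m =>
    have h1 : ‖(EuclideanSpace.single (0 : Fin (m+1)) (1:ℝ))‖ = 1 := by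
      rw [EuclideanSpace.norm_single]; norm_num
    exact ⟨(ℝ ∙ (EuclideanSpace.single (0 : Fin (m+1)) (1:ℝ)))ᗮ, finrank_orth_span_unit h1⟩

lemma support_normal {n : ℕ} {C : Set (EuclideanSpace ℝ (Fin n))} (hC : Convex ℝ C)
    (hne : (interior C).Nonempty) {x : EuclideanSpace ℝ (Fin n)} (hx : x ∈ frontier C) :
    ∃ ν : EuclideanSpace ℝ (Fin n), ‖ν‖ = 1 ∧ ∀ y ∈ closure C, ⟪y - x, ν⟫ ≤ 0 := by
  obtain ⟨a, ha⟩ := hne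
  have hxI : x ∉ interior C := hx.2
  obtain ⟨f, hf⟩ := geometric_hahn_banach_open_point (hC.interior) isOpen_interior hxI
  have hfa : f a < f x := hf a ha
  have key : ∀ y ∈ closure C, f y ≤ f x := by
    intro y hy
    by_contra hlt
    push_neg at hlt
    have h1 : 0 < f y - f a := by linarith
    set s : ℝ := (f y - f x) / (2 * (f y - f a)) with hs
    have hs0 : 0 < s := by rw [hs]; apply div_pos (by linarith); linarith
    have hs1 : s ≤ 1 := by
      rw [hs, div_le_one (by linarith)]
      linarith
    have hmem := hC.combo_closure_interior_mem_interior hy ha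
      (by linarith : (0:ℝ) ≤ 1 - s) hs0 (by ring)
    have := hf _ hmem
    rw [map_add, map_smul, map_smul] at this
    simp only [smul_eq_mul] at this
    have hseq : s * (f y - f a) = (f y - f x) / 2 := by
      rw [hs]; field_simp
    nlinarith
  have hf0 : f ≠ 0 := by
    intro h; rw [h] at hfa; simp at hfa
  set v := (InnerProductSpace.toDual ℝ (EuclideanSpace ℝ (Fin n))).symm f with hv
  have hfv : ∀ z, ⟪v, z⟫ = f z := fun z => InnerProductSpace.toDual_symm_apply
  have hv0 : v ≠ 0 := by
    intro h
    apply hf0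
    ext z
    have := hfv z
    rw [h] at this
    simpa using this.symm
  refine ⟨‖v‖⁻¹ • v, norm_smul_inv_norm hv0, fun y hy => ?_⟩
  have hle : ⟪y - x, v⟫ ≤ 0 := by
    rw [real_inner_comm, inner_sub_right, hfv, hfv]
    linarith [key y hy]
  rw [real_inner_smul_right]
  exact mul_nonpos_of_nonneg_of_nonpos (by positivity) hle

lemma planar_piece {n : ℕ} {α : ℝ} (C : Set (EuclideanSpace ℝ (Fin n)))
    {t : EuclideanSpace ℝ (Fin n)} (ht : ‖t‖ = 1) :
    IsPlanar ((ℝ ∙ t)ᗮ) α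
      {x | x ∈ frontier C ∧ ∃ ν, ‖ν‖ = 1 ∧ (∀ y ∈ closure C, ⟪y - x, ν⟫ ≤ 0) ∧ ν ∈ ball t α} := by
  rintro x ⟨hxf, νx, hνx1, hνx2, hνx3⟩ y ⟨hyf, νy, hνy1, hνy2, hνy3⟩
  rw [norm_projV_orth_span ht, real_inner_comm]
  have hxc : x ∈ closure C := frontier_subset_closure hxf
  have hyc : y ∈ closure C := frontier_subset_closure hyf
  have hbx : ‖t - νx‖ ≤ α := by
    have : dist νx t < α := mem_ball.mp hνx3
    rw [dist_eq_norm, ← norm_neg] at this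
    simp only [neg_sub] at this
    linarith
  have hby : ‖t - νy‖ ≤ α := by
    have : dist νy t < α := mem_ball.mp hνy3
    rw [dist_eq_norm, ← norm_neg] at this
    simp only [neg_sub] at this
    linarith
  rw [abs_le]
  constructor
  · have h1 : 0 ≤ ⟪y - x, νy⟫ := by
      have := hνy2 x hxc
      have e : ⟪y - x, νy⟫ = -⟪x - y, νy⟫ := by
        rw [← inner_neg_left]; congr 1; abel
      rw [e]; linarith
    have h2 : ⟪y - x, t⟫ = ⟪y - x, νy⟫ + ⟪y - x, t - νy⟫ := by
      rw [← inner_add_right]; congr 1; abel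
    have h3 : |⟪y - x, t - νy⟫| ≤ ‖y - x‖ * ‖t - νy‖ := abs_real_inner_le_norm _ _
    have h4 : ‖y - x‖ * ‖t - νy‖ ≤ ‖y - x‖ * α :=
      mul_le_mul_of_nonneg_left hby (norm_nonneg _)
    rw [h2]
    have := abs_le.mp h3
    nlinarith [norm_nonneg (y - x)]
  · have h1 : ⟪y - x, νx⟫ ≤ 0 := hνx2 y hyc
    have h2 : ⟪y - x, t⟫ = ⟪y - x, νx⟫ + ⟪y - x, t - νx⟫ := by
      rw [← inner_add_right]; congr 1; abel
    have h3 : |⟪y - x, t - νx⟫| ≤ ‖y - x‖ * ‖t - νx‖ := abs_real_inner_le_norm _ _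
    have h4 : ‖y - x‖ * ‖t - νx‖ ≤ ‖y - x‖ * α :=
      mul_le_mul_of_nonneg_left hbx (norm_nonneg _)
    rw [h2]
    have := abs_le.mp h3
    nlinarith [norm_nonneg (y - x)]

/-- The boundary of any convex `C ⊆ ℝⁿ` decomposes into `M = M(n, α)` many
`(n-1, α)`-planar pieces. -/
theorem stmt1 (n : ℕ) (α : ℝ) (hα0 : 0 < α) (hα1 : α < 1) :
    ∃ M : ℕ, 0 < M ∧ ∀ C : Set (EuclideanSpace ℝ (Fin n)), Convex ℝ C →
      ∃ P : Fin M → Set (EuclideanSpace ℝ (Fin n)),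
        frontier C = ⋃ i, P i ∧
        ∀ i, ∃ V : Submodule ℝ (EuclideanSpace ℝ (Fin n)),
          Module.finrank ℝ V = n - 1 ∧ IsPlanar V α (P i) := by
  obtain ⟨T, hT1, hT2⟩ := (isCompact_sphere (0 : EuclideanSpace ℝ (Fin n)) 1).elim_nhds_subcover
    (fun θ => ball θ α) (fun θ _ => ball_mem_nhds θ hα0)
  refine ⟨T.card + 1, Nat.succ_pos _, fun C hC => ?_⟩
  set eq : ↥T ≃ Fin T.card := Fintype.equivFinOfCardEq (Fintype.card_coe T) with heq
  set e : Fin T.card → EuclideanSpace ℝ (Fin n) := fun i => ((eq.symm i : ↥T) : _) with he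
  have hee : ∀ i, ‖e i‖ = 1 := by
    intro i
    have hm : (e i) ∈ T := (eq.symm i).2
    have := hT1 _ hm
    rw [mem_sphere_iff_norm, sub_zero] at this
    exact this
  by_cases hne : (interior C).Nonempty
  · set Q : EuclideanSpace ℝ (Fin n) → Set (EuclideanSpace ℝ (Fin n)) := fun t =>
      {x | x ∈ frontier C ∧ ∃ ν, ‖ν‖ = 1 ∧ (∀ y ∈ closure C, ⟪y - x, ν⟫ ≤ 0) ∧ ν ∈ ball t α}
      with hQ
    refine ⟨Fin.cons ∅ (fun i => Q (e i)), ?_, ?_⟩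
    · apply subset_antisymm
      · intro x hx
        obtain ⟨ν, hν1, hν2⟩ := support_normal hC hne hx
        have hνs : ν ∈ sphere (0 : EuclideanSpace ℝ (Fin n)) 1 := by
          rw [mem_sphere_iff_norm, sub_zero]; exact hν1
        have := hT2 hνs
        rw [mem_iUnion₂] at this
        obtain ⟨θ, hθT, hθb⟩ := this
        refine mem_iUnion.mpr ⟨(eq ⟨θ, hθT⟩).succ, ?_⟩
        rw [Fin.cons_succ]
        have hej : e (eq ⟨θ, hθT⟩) = θ := by rw [he]; simp
        exact ⟨hx, ν, hν1, hν2, by rw [hej]; exact hθb⟩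
      · refine iUnion_subset fun i => ?_
        refine Fin.cases ?_ ?_ i
        · rw [Fin.cons_zero]; exact empty_subset _
        · intro j
          rw [Fin.cons_succ]
          exact fun x hx => hx.1
    · intro i
      refine Fin.cases ?_ ?_ i
      · obtain ⟨V, hV⟩ := exists_hyperplane n
        refine ⟨V, hV, ?_⟩
        rw [Fin.cons_zero]
        intro x hx
        exact absurd hx (notMem_empty x)
      · intro j
        refine ⟨(ℝ ∙ e j)ᗮ, finrank_orth_span_unit (hee j), ?_⟩
        rw [Fin.cons_succ]
        exact planar_piece C (hee j)
  · rcases C.eq_empty_or_nonempty with hCe | hCne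
    · refine ⟨fun _ => ∅, by simp [hCe], fun i => ?_⟩
      obtain ⟨V, hV⟩ := exists_hyperplane n
      exact ⟨V, hV, fun x hx => absurd hx (notMem_empty x)⟩
    · have hspan : affineSpan ℝ C ≠ ⊤ := by
        intro h
        rw [← hC.interior_nonempty_iff_affineSpan_eq_top] at h
        exact hne h
      have hd : (affineSpan ℝ C).direction ≠ ⊤ := by
        rw [Ne, AffineSubspace.direction_eq_top_iff_of_nonempty
          (hCne.mono (subset_affineSpan ℝ C))]
        exact hspan
      have hob : ((affineSpan ℝ C).direction)ᗮ ≠ ⊥ := by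
        rw [Ne, Submodule.orthogonal_eq_bot_iff]
        exact hd
      obtain ⟨θ0, hθ0m, hθ00⟩ := Submodule.exists_mem_ne_zero_of_ne_bot hob
      have hθ1 : ‖(‖θ0‖⁻¹ • θ0 : EuclideanSpace ℝ (Fin n))‖ = 1 := norm_smul_inv_norm hθ00
      have hθm : (‖θ0‖⁻¹ • θ0 : EuclideanSpace ℝ (Fin n)) ∈ ((affineSpan ℝ C).direction)ᗮ :=
        Submodule.smul_mem _ _ hθ0m
      refine ⟨fun i => if i = 0 then frontier C else ∅, ?_, ?_⟩
      · apply subset_antisymm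
        · intro x hx
          exact mem_iUnion.mpr ⟨0, by simpa using hx⟩
        · refine iUnion_subset fun i => ?_
          split_ifs with h
          · exact subset_rfl
          · exact empty_subset _
      · intro i
        by_cases h : i = 0
        · subst h
          simp only [if_pos rfl]
          refine ⟨(ℝ ∙ (‖θ0‖⁻¹ • θ0 : EuclideanSpace ℝ (Fin n)))ᗮ,
            finrank_orth_span_unit hθ1, ?_⟩
          intro x hx y hy
          have hsub : closure C ⊆ (affineSpan ℝ C : Set (EuclideanSpace ℝ (Fin n))) :=
            closure_minimal (subset_affineSpan ℝ C)
              (affineSpan ℝ C).closed_of_finiteDimensional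
          have hx' : x ∈ affineSpan ℝ C := hsub (frontier_subset_closure hx)
          have hy' : y ∈ affineSpan ℝ C := hsub (frontier_subset_closure hy)
          have hdir : y - x ∈ (affineSpan ℝ C).direction := by
            have := AffineSubspace.vsub_mem_direction hy' hx'
            simpa [vsub_eq_sub] using this
          have hz : ⟪y - x, (‖θ0‖⁻¹ • θ0 : EuclideanSpace ℝ (Fin n))⟫ = 0 :=
            (Submodule.mem_orthogonal _ _).mp hθm _ hdir
          rw [norm_projV_orth_span hθ1, real_inner_comm, hz, abs_zero]
          positivity
        · simp only [if_neg h]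
          obtain ⟨V, hV⟩ := exists_hyperplane n
          exact ⟨V, hV, fun x hx => absurd hx (notMem_empty x)⟩
end

section
/- Let V be an m-dimensional linear subspace of ℝⁿ, 0 < α < 1, and A ⊂ ℝⁿ. Then A is (V, α)-planar if and only if there is a function f : proj_V(A) → V⊥ with Lipschitz constant α/√(1 − α²) such that A = {v + f(v) : v ∈ proj_V(A)} (identifying ℝⁿ with V ⊕ V⊥). -/
open Metric Set Filter
open scoped RealInnerProductSpace

/-!
By Pythagoras, `‖P⊥ z‖ ≤ α ‖z‖` is equivalent to `‖P⊥ z‖ ≤ α / √(1 - α²) ‖P z‖`, where `P` and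
`P⊥` are the orthogonal projections onto `V` and `Vᗮ`. Planarity therefore says that `P⊥` is
`α / √(1 - α²)`-Lipschitz along `A` relative to `P`; in particular `P` is injective on `A`, and
`A` is the graph over `P(A)` of `P⊥ ∘ (P|_A)⁻¹`.
-/

open scoped NNReal

theorem le_mul_sqrt_sq_add_sq_iff {α p q : ℝ} (hα0 : 0 ≤ α) (hα1 : α < 1) (hp : 0 ≤ p)
    (hq : 0 ≤ q) : q ≤ α * √(p ^ 2 + q ^ 2) ↔ q ≤ α / √(1 - α ^ 2) * p := by
  have hα : 0 < 1 - α ^ 2 := by nlinarith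
  calc q ≤ α * √(p ^ 2 + q ^ 2) ↔ q ^ 2 ≤ (α * √(p ^ 2 + q ^ 2)) ^ 2 :=
        (pow_le_pow_iff_left₀ hq (by positivity) two_ne_zero).symm
    _ ↔ (q * √(1 - α ^ 2)) ^ 2 ≤ (α * p) ^ 2 := by
        rw [mul_pow, mul_pow, Real.sq_sqrt (by positivity), Real.sq_sqrt hα.le]
        constructor <;> intro h <;> linarith
    _ ↔ q * √(1 - α ^ 2) ≤ α * p :=
        pow_le_pow_iff_left₀ (by positivity) (by positivity) two_ne_zero
    _ ↔ q ≤ α / √(1 - α ^ 2) * p := by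
        rw [div_mul_eq_mul_div, le_div_iff₀ (Real.sqrt_pos.2 hα)]

namespace Submodule

variable {E : Type*} [NormedAddCommGroup E] [InnerProductSpace ℝ E]
  (K : Submodule ℝ E) [K.HasOrthogonalProjection]

theorem norm_starProjection_orthogonal_le_mul_norm_iff {α : ℝ} (hα0 : 0 ≤ α) (hα1 : α < 1)
    (z : E) : ‖Kᗮ.starProjection z‖ ≤ α * ‖z‖ ↔
      ‖Kᗮ.starProjection z‖ ≤ α / √(1 - α ^ 2) * ‖K.starProjection z‖ := by
  rw [← Real.sqrt_sq (norm_nonneg z), K.norm_sq_eq_add_norm_sq_starProjection z]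
  exact le_mul_sqrt_sq_add_sq_iff hα0 hα1 (norm_nonneg _) (norm_nonneg _)

variable {K}

theorem starProjection_add_of_mem_orthogonal {v u : E} (hv : v ∈ K) (hu : u ∈ Kᗮ) :
    K.starProjection (v + u) = v :=
  eq_starProjection_of_mem_orthogonal' hv hu rfl

theorem starProjection_orthogonal_add_of_mem_orthogonal {v u : E} (hv : v ∈ K) (hu : u ∈ Kᗮ) :
    Kᗮ.starProjection (v + u) = u :=
  eq_starProjection_of_mem_orthogonal' hu (K.le_orthogonal_orthogonal hv) (add_comm v u)

variable {A : Set E} {L : ℝ≥0}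

theorem exists_lipschitzOnWith_graph_of_norm_le
    (hA : ∀ x ∈ A, ∀ y ∈ A, ‖Kᗮ.starProjection (y - x)‖ ≤ L * ‖K.starProjection (y - x)‖) :
    ∃ f : E → E, (∀ v, f v ∈ Kᗮ) ∧ LipschitzOnWith L f (K.starProjection '' A) ∧
      A = (fun v => v + f v) '' (K.starProjection '' A) := by
  set g := Function.invFunOn K.starProjection A
  have hg : ∀ v ∈ K.starProjection '' A, g v ∈ A ∧ K.starProjection (g v) = v :=
    fun v hv => Function.invFunOn_pos (by simpa using hv)
  refine ⟨fun v => Kᗮ.starProjection (g v), fun v => starProjection_apply_mem _ _, ?_, ?_⟩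
  · refine LipschitzOnWith.of_dist_le_mul fun v hv w hw => ?_
    obtain ⟨hgv, hpv⟩ := hg v hv
    obtain ⟨hgw, hpw⟩ := hg w hw
    simpa only [dist_eq_norm, map_sub, hpv, hpw] using hA _ hgw _ hgv
  · ext x
    constructor
    · intro hx
      obtain ⟨hgx, hpx⟩ := hg _ (mem_image_of_mem _ hx)
      have hfx : Kᗮ.starProjection (g (K.starProjection x)) = Kᗮ.starProjection x := by
        simpa only [map_sub, hpx, sub_self, norm_zero, mul_zero, norm_le_zero_iff,
          sub_eq_zero] using hA _ hx _ hgx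
      refine ⟨_, mem_image_of_mem _ hx, ?_⟩
      simp only [hfx, starProjection_add_starProjection_orthogonal]
    · rintro ⟨v, hv, rfl⟩
      obtain ⟨hgv, hpv⟩ := hg v hv
      have hsplit := K.starProjection_add_starProjection_orthogonal (g v)
      rw [hpv] at hsplit
      simpa only [hsplit] using hgv

theorem norm_le_of_lipschitzOnWith_graph {f : E → E} (hfK : ∀ v, f v ∈ Kᗮ)
    (hf : LipschitzOnWith L f (K.starProjection '' A))
    (hA : A = (fun v => v + f v) '' (K.starProjection '' A)) :
    ∀ x ∈ A, ∀ y ∈ A, ‖Kᗮ.starProjection (y - x)‖ ≤ L * ‖K.starProjection (y - x)‖ := by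
  have hmem : ∀ v ∈ K.starProjection '' A, v ∈ K := by
    rintro _ ⟨a, -, rfl⟩
    exact starProjection_apply_mem _ a
  intro x hx y hy
  rw [hA] at hx hy
  obtain ⟨v, hv, rfl⟩ := hx
  obtain ⟨w, hw, rfl⟩ := hy
  have hwvK : w - v ∈ K := sub_mem (hmem w hw) (hmem v hv)
  have hfwvK : f w - f v ∈ Kᗮ := sub_mem (hfK w) (hfK v)
  rw [add_sub_add_comm, starProjection_add_of_mem_orthogonal hwvK hfwvK,
    starProjection_orthogonal_add_of_mem_orthogonal hwvK hfwvK, ← dist_eq_norm, ← dist_eq_norm]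
  exact hf.dist_le_mul w hw v hv

theorem norm_le_iff_exists_lipschitzOnWith_graph :
    (∀ x ∈ A, ∀ y ∈ A, ‖Kᗮ.starProjection (y - x)‖ ≤ L * ‖K.starProjection (y - x)‖) ↔
      ∃ f : E → E, (∀ v, f v ∈ Kᗮ) ∧ LipschitzOnWith L f (K.starProjection '' A) ∧
        A = (fun v => v + f v) '' (K.starProjection '' A) :=
  ⟨exists_lipschitzOnWith_graph_of_norm_le,
    fun ⟨_, hfK, hf, hA⟩ => norm_le_of_lipschitzOnWith_graph hfK hf hA⟩

end Submodule

theorem stmt5_general (n : ℕ) (V : Submodule ℝ (EuclideanSpace ℝ (Fin n)))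
    (α : ℝ) (hα0 : 0 < α) (hα1 : α < 1)
    (A : Set (EuclideanSpace ℝ (Fin n))) :
    IsPlanar V α A ↔
      ∃ f : EuclideanSpace ℝ (Fin n) → EuclideanSpace ℝ (Fin n),
        (∀ v, f v ∈ Vᗮ) ∧
        LipschitzOnWith (Real.toNNReal (α / Real.sqrt (1 - α^2))) f (projV V '' A) ∧
        A = (fun v => v + f v) '' (projV V '' A) := by
  have hprojV : ∀ K : Submodule ℝ (EuclideanSpace ℝ (Fin n)), projV K = K.starProjection :=
    fun _ => rfl
  have hL : ((α / √(1 - α ^ 2)).toNNReal : ℝ) = α / √(1 - α ^ 2) :=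
    Real.coe_toNNReal _ (by positivity)
  unfold IsPlanar
  simp only [hprojV]
  rw [← Submodule.norm_le_iff_exists_lipschitzOnWith_graph, hL]
  exact forall₂_congr fun x _ => forall₂_congr fun y _ =>
    V.norm_starProjection_orthogonal_le_mul_norm_iff hα0.le hα1 (y - x)

/-- `A` is `(V, α)`-planar iff it is the graph over `proj_V(A)` of an
`(α/√(1-α²))`-Lipschitz map with values in `V⊥`. -/
theorem stmt5 (n m : ℕ) (V : Submodule ℝ (EuclideanSpace ℝ (Fin n)))
    (hVdim : Module.finrank ℝ V = m) (α : ℝ) (hα0 : 0 < α) (hα1 : α < 1)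
    (A : Set (EuclideanSpace ℝ (Fin n))) :
    IsPlanar V α A ↔
      ∃ f : EuclideanSpace ℝ (Fin n) → EuclideanSpace ℝ (Fin n),
        (∀ v, f v ∈ Vᗮ) ∧
        LipschitzOnWith (Real.toNNReal (α / Real.sqrt (1 - α^2))) f (projV V '' A) ∧
        A = (fun v => v + f v) '' (projV V '' A) :=
  stmt5_general n V α hα0 hα1 A
end

section
/- Let √2 − 1 < ϱ < 1/2, r₀ > 0, and A ⊂ ℝⁿ with por_k(A, x, r) > ϱ for all x ∈ A and 0 < r < r₀. Set t = 1/√(1 − 2ϱ) and δ = (1 − ϱ − √(ϱ² + 2ϱ − 1))/√(1 − 2ϱ). Then for any 0 < r < r₀/(2t), x ∈ A, and y ∈ A ∩ B(x, r), there exist pairwise orthogonal unit vectors θ₁, …, θ_k ∈ S^{n−1} such that A ∩ B(x, r) ∩ H(y + 2δrθ_i, θ_i) = ∅ for all i = 1, …, k. -/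
open Metric Set Filter
open scoped RealInnerProductSpace

/-- `k`-porosity of `A` at `x` at scale `r`. -/
noncomputable def porK (n k : ℕ) (A : Set (EuclideanSpace ℝ (Fin n)))
    (x : EuclideanSpace ℝ (Fin n)) (r : ℝ) : ℝ :=
  sSup {ϱ : ℝ | ∃ z : Fin k → EuclideanSpace ℝ (Fin n),
    (∀ i, closedBall (z i) (ϱ * r) ⊆ closedBall x r \ A) ∧
    ∀ i j, i ≠ j → ⟪z i - x, z j - x⟫ = 0}

/-- `k`-porosity of `A` at `x`: `liminf` as `r ↓ 0`. -/
noncomputable def porKPt (n k : ℕ) (A : Set (EuclideanSpace ℝ (Fin n)))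
    (x : EuclideanSpace ℝ (Fin n)) : ℝ :=
  Filter.liminf (fun r => porK n k A x r) (nhdsWithin 0 (Set.Ioi 0))

/-- `k`-porosity of `A`: infimum over `x ∈ A`. -/
noncomputable def porKSet (n k : ℕ) (A : Set (EuclideanSpace ℝ (Fin n))) : ℝ :=
  sInf (porKPt n k A '' A)

private lemma quadInterp (d d1 d2 b c : ℝ) (h12 : d1 < d2) (h1 : d1 ≤ d) (h2 : d ≤ d2)
    (hF1 : d1^2 - b*d1 + c ≤ 0) (hF2 : d2^2 - b*d2 + c ≤ 0) :
    d^2 - b*d + c ≤ 0 := by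
  nlinarith [mul_nonneg (mul_nonneg (sub_nonneg.mpr h1) (sub_nonneg.mpr h2))
      (sub_nonneg.mpr (h1.trans h2)),
    mul_nonneg (sub_nonneg.mpr h1) (sub_nonneg.mpr h2), hF1, hF2,
    sub_nonneg.mpr h1, sub_nonneg.mpr h2, sub_pos.mpr h12]

set_option maxHeartbeats 1000000 in
/-- Lemma: `k`-porous sets have `k` orthogonal half-space holes near every point. -/
theorem stmt9 (n k : ℕ) (ϱ r₀ : ℝ) (hϱ1 : Real.sqrt 2 - 1 < ϱ) (hϱ2 : ϱ < 1/2)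
    (hr₀ : 0 < r₀) (A : Set (EuclideanSpace ℝ (Fin n)))
    (hA : ∀ x ∈ A, ∀ r : ℝ, 0 < r → r < r₀ → ϱ < porK n k A x r)
    (t δ : ℝ) (ht : t = 1 / Real.sqrt (1 - 2*ϱ))
    (hδ : δ = (1 - ϱ - Real.sqrt (ϱ^2 + 2*ϱ - 1)) / Real.sqrt (1 - 2*ϱ))
    (r : ℝ) (hr : 0 < r) (hrr : r < r₀ / (2 * t))
    (x : EuclideanSpace ℝ (Fin n)) (hx : x ∈ A)
    (y : EuclideanSpace ℝ (Fin n)) (hy : y ∈ A ∩ closedBall x r) :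
    ∃ θ : Fin k → EuclideanSpace ℝ (Fin n),
      (∀ i, ‖θ i‖ = 1) ∧ (∀ i j, i ≠ j → ⟪θ i, θ j⟫ = 0) ∧
      ∀ i, A ∩ closedBall x r ∩ HS (y + (2 * δ * r) • θ i) (θ i) = ∅ := by
  obtain ⟨hyA, hyB⟩ := hy
  -- numeric facts
  have h2 : Real.sqrt 2 ^ 2 = 2 := Real.sq_sqrt (by norm_num)
  have h2n : (0:ℝ) ≤ Real.sqrt 2 := Real.sqrt_nonneg 2
  have h141 : (1.41:ℝ) < Real.sqrt 2 := by nlinarith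
  have hϱ0 : (0:ℝ) < ϱ := by linarith
  have h12 : (0:ℝ) < 1 - 2*ϱ := by linarith
  have hs2sq : Real.sqrt (1 - 2*ϱ) ^ 2 = 1 - 2*ϱ := Real.sq_sqrt h12.le
  have hs2pos : 0 < Real.sqrt (1 - 2*ϱ) := Real.sqrt_pos.mpr h12
  have hwpos : (0:ℝ) < ϱ^2 + 2*ϱ - 1 := by nlinarith
  have hswsq : Real.sqrt (ϱ^2 + 2*ϱ - 1) ^ 2 = ϱ^2 + 2*ϱ - 1 := Real.sq_sqrt hwpos.le
  have hswn : (0:ℝ) ≤ Real.sqrt (ϱ^2 + 2*ϱ - 1) := Real.sqrt_nonneg _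
  have htpos : 0 < t := by rw [ht]; positivity
  have hδpos : 0 < δ := by
    rw [hδ]
    apply div_pos _ hs2pos
    nlinarith [hswsq, hswn]
  have hδt : 0 < δ * t := mul_pos hδpos htpos
  have hc : δ * t * (1 - 2*ϱ) = 1 - ϱ - Real.sqrt (ϱ^2 + 2*ϱ - 1) := by
    rw [hδ, ht]
    field_simp
    rw [show (1 - ϱ*2) = 1 - 2*ϱ by ring, hs2sq, mul_div_assoc, div_self h12.ne', mul_one]
  have ht2 : t^2 * (1 - 2*ϱ) = 1 := by
    rw [ht, div_pow, one_pow, hs2sq]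
    field_simp
  have h126 : (0:ℝ) ≤ (1 - 2*ϱ)*(12*ϱ^2 - 6*ϱ + 1) := by nlinarith [sq_nonneg (ϱ - 1/4)]
  have hbase : (0:ℝ) < 4*ϱ - 2*ϱ^2 - 1 := by
    nlinarith [mul_pos (show (0:ℝ) < ϱ - 0.41 by linarith) (show (0:ℝ) < 1/2 - ϱ by linarith)]
  have hK1 : 1 ≤ 2*ϱ*(δ*t) := by
    have hq2 : (2*ϱ*Real.sqrt (ϱ^2 + 2*ϱ - 1))^2 = 4*ϱ^2*(ϱ^2 + 2*ϱ - 1) := by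
      rw [mul_pow, hswsq]; ring
    have hqn : 0 ≤ 2*ϱ*Real.sqrt (ϱ^2 + 2*ϱ - 1) := by positivity
    have h : 2*ϱ*Real.sqrt (ϱ^2 + 2*ϱ - 1) ≤ 4*ϱ - 2*ϱ^2 - 1 := by
      refine le_of_pow_le_pow_left₀ two_ne_zero hbase.le ?_
      rw [hq2]; linarith [h126]
    have h' : 1*(1 - 2*ϱ) ≤ 2*ϱ*(δ*t)*(1 - 2*ϱ) := by
      rw [show 2*ϱ*(δ*t)*(1 - 2*ϱ) = 2*ϱ*(δ*t*(1 - 2*ϱ)) by ring, hc]; linarith [h]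
    exact le_of_mul_le_mul_right h' h12
  have hK2 : 1 ≤ (1 - ϱ)*(δ*t) := by
    have hq2 : ((1 - ϱ)*Real.sqrt (ϱ^2 + 2*ϱ - 1))^2 = (1 - ϱ)^2*(ϱ^2 + 2*ϱ - 1) := by
      rw [mul_pow, hswsq]
    have hqn : 0 ≤ (1 - ϱ)*Real.sqrt (ϱ^2 + 2*ϱ - 1) := by
      apply mul_nonneg (by linarith) hswn
    have h : (1 - ϱ)*Real.sqrt (ϱ^2 + 2*ϱ - 1) ≤ ϱ^2 := by
      refine le_of_pow_le_pow_left₀ two_ne_zero (by positivity) ?_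
      rw [hq2]; linarith [sq_nonneg (1 - 2*ϱ)]
    have h' : 1*(1 - 2*ϱ) ≤ (1 - ϱ)*(δ*t)*(1 - 2*ϱ) := by
      rw [show (1 - ϱ)*(δ*t)*(1 - 2*ϱ) = (1 - ϱ)*(δ*t*(1 - 2*ϱ)) by ring, hc]; linarith [h]
    exact le_of_mul_le_mul_right h' h12
  have hK3 : (δ*t)*(1 - 2*ϱ) ≤ 1 := by
    rw [show (δ*t)*(1 - 2*ϱ) = δ*t*(1 - 2*ϱ) by ring, hc]; linarith
  have hδt2 : δ*t ≤ t^2 := le_of_mul_le_mul_right (by linarith [hK3, ht2]) h12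
  -- apply porosity at y at scale R = 2*t*r
  have hR0 : 0 < 2*t*r := by positivity
  have hRr₀ : 2*t*r < r₀ := by
    rw [lt_div_iff₀ (by positivity : (0:ℝ) < 2*t)] at hrr
    linarith [hrr]
  have hpor := hA y hyA (2*t*r) hR0 hRr₀
  rw [porK] at hpor
  have hSne : Set.Nonempty {ϱ'' : ℝ | ∃ z : Fin k → EuclideanSpace ℝ (Fin n),
      (∀ i, closedBall (z i) (ϱ'' * (2*t*r)) ⊆ closedBall y (2*t*r) \ A) ∧
      ∀ i j, i ≠ j → ⟪z i - y, z j - y⟫ = 0} := by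
    refine ⟨-1, fun _ => y, fun i => ?_, fun i j _ => ?_⟩
    · rw [closedBall_eq_empty.mpr (by linarith [hR0] : (-1:ℝ) * (2*t*r) < 0)]
      exact empty_subset _
    · show ⟪y - y, y - y⟫ = 0
      rw [sub_self]
      exact inner_zero_left _
  obtain ⟨ϱ', ⟨z, hz1, hz2⟩, hϱϱ'⟩ := exists_lt_of_lt_csSup hSne hpor
  have hϱ'0 : 0 < ϱ' := hϱ0.trans hϱϱ'
  have hρ'R : 0 < ϱ' * (2*t*r) := by positivity
  have hdlb : ∀ i, ϱ' * (2*t*r) < ‖z i - y‖ := by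
    intro i
    by_contra h
    push_neg at h
    have hyz : y ∈ closedBall (z i) (ϱ' * (2*t*r)) := by
      rw [mem_closedBall, dist_eq_norm, norm_sub_rev]
      exact h
    exact (hz1 i hyz).2 hyA
  have hdpos : ∀ i, 0 < ‖z i - y‖ := fun i => hρ'R.trans (hdlb i)
  have hdub : ∀ i, ‖z i - y‖ + ϱ' * (2*t*r) ≤ 2*t*r := by
    intro i
    have hc0 : 0 ≤ ϱ' * (2*t*r) / ‖z i - y‖ := by positivity
    have hcd : (ϱ' * (2*t*r) / ‖z i - y‖) * ‖z i - y‖ = ϱ' * (2*t*r) :=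
      div_mul_cancel₀ _ (hdpos i).ne'
    have hmem : z i + (ϱ' * (2*t*r) / ‖z i - y‖) • (z i - y) ∈
        closedBall (z i) (ϱ' * (2*t*r)) := by
      rw [mem_closedBall, dist_eq_norm, add_sub_cancel_left, norm_smul,
        Real.norm_eq_abs, abs_of_nonneg hc0, hcd]
    have hm2 := (hz1 i hmem).1
    rw [mem_closedBall, dist_eq_norm] at hm2
    have heq : z i + (ϱ' * (2*t*r) / ‖z i - y‖) • (z i - y) - y
        = (1 + ϱ' * (2*t*r) / ‖z i - y‖) • (z i - y) := by
      rw [add_smul, one_smul]; abel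
    rw [heq, norm_smul, Real.norm_eq_abs, abs_of_nonneg (by linarith)] at hm2
    linarith [hm2, hcd]
  set θ : Fin k → EuclideanSpace ℝ (Fin n) := fun i => (‖z i - y‖)⁻¹ • (z i - y) with hθ
  have hθn : ∀ i, ‖θ i‖ = 1 := by
    intro i
    rw [hθ]
    simp only []
    rw [norm_smul, Real.norm_eq_abs, abs_of_nonneg (by positivity),
      inv_mul_cancel₀ (hdpos i).ne']
  refine ⟨θ, hθn, fun i j hij => ?_, fun i => ?_⟩
  · rw [hθ]
    simp only []
    rw [real_inner_smul_left, real_inner_smul_right, hz2 i j hij]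
    ring
  · rw [Set.eq_empty_iff_forall_notMem]
    rintro a ⟨⟨haA, haB⟩, haH⟩
    simp only [HS, Set.mem_setOf_eq] at haH
    rw [sub_add_eq_sub_sub, inner_sub_left, real_inner_smul_left,
      real_inner_self_eq_norm_sq, hθn i] at haH
    have hs : 2*δ*r < ⟪a - y, θ i⟫ := by linarith [haH]
    have hay : ‖a - y‖ ≤ 2*r := by
      have h1 : dist a y ≤ dist a x + dist x y := dist_triangle a x y
      have ha2 : dist a x ≤ r := mem_closedBall.mp haB
      have ha3 : dist x y ≤ r := by rw [dist_comm]; exact mem_closedBall.mp hyB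
      rw [dist_eq_norm] at h1
      linarith
    have hdθ : ‖z i - y‖ • θ i = z i - y := by
      rw [hθ]
      simp only []
      rw [smul_smul, mul_inv_cancel₀ (hdpos i).ne', one_smul]
    have hnormsq : ‖a - z i‖^2
        = ‖a - y‖^2 - 2*(‖z i - y‖ * ⟪a - y, θ i⟫) + ‖z i - y‖^2 := by
      have heq : a - z i = (a - y) - ‖z i - y‖ • θ i := by rw [hdθ]; abel
      rw [heq, norm_sub_sq_real, real_inner_smul_right, norm_smul,
        Real.norm_eq_abs, abs_of_nonneg (hdpos i).le, hθn i, mul_one]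
    -- endpoint inequalities for the quadratic in d
    have hF1 : 4*r^2 ≤ 4*δ*r*(ϱ' * (2*t*r)) := by
      have h1' : 1 ≤ 2*ϱ'*(δ*t) := by
        have hp : 0 ≤ (ϱ' - ϱ)*(δ*t) := mul_nonneg (by linarith) hδt.le
        linarith [hK1, hp]
      have h2' := mul_le_mul_of_nonneg_right h1' (mul_pos hr hr).le
      linarith [h2']
    have hmain : 1 + t^2*(1 - 2*ϱ') ≤ 2*(δ*t)*(1 - ϱ') := by
      have hp : 0 ≤ (t^2 - δ*t)*(ϱ' - ϱ) := mul_nonneg (by linarith [hδt2]) (by linarith)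
      linarith [hK2, ht2, hp]
    have hF2 : (2*t*r - ϱ' * (2*t*r))^2 - 4*δ*r*(2*t*r - ϱ' * (2*t*r)) + 4*r^2
        ≤ (ϱ' * (2*t*r))^2 := by
      have h2' := mul_le_mul_of_nonneg_right hmain (mul_pos hr hr).le
      linarith [h2']
    have hdlb' := hdlb i
    have hdub' := hdub i
    have hd12 : ϱ' * (2*t*r) < 2*t*r - ϱ' * (2*t*r) := by linarith
    have hGneg : ‖z i - y‖^2 - 4*δ*r*‖z i - y‖ + 4*r^2 ≤ (ϱ' * (2*t*r))^2 := by
      have hq := quadInterp (‖z i - y‖) (ϱ' * (2*t*r)) (2*t*r - ϱ' * (2*t*r)) (4*δ*r)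
        (4*r^2 - (ϱ' * (2*t*r))^2) hd12 (by linarith) (by linarith)
        (by linarith [hF1]) (by linarith [hF2])
      linarith [hq]
    have hstep : ‖a - z i‖^2 ≤ ‖z i - y‖^2 - 4*δ*r*‖z i - y‖ + 4*r^2 := by
      rw [hnormsq]
      have ha1 : ‖a - y‖^2 ≤ (2*r)^2 := pow_le_pow_left₀ (norm_nonneg _) hay 2
      have ha2 : 2*δ*r*‖z i - y‖ ≤ ⟪a - y, θ i⟫ * ‖z i - y‖ :=
        mul_le_mul_of_nonneg_right hs.le (hdpos i).le
      linarith [ha1, ha2]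
    have hfin : a ∈ closedBall (z i) (ϱ' * (2*t*r)) := by
      rw [mem_closedBall, dist_eq_norm]
      refine le_of_pow_le_pow_left₀ two_ne_zero hρ'R.le ?_
      linarith [hstep, hGneg]
    exact (hz1 i hfin).2 haA
end

section
/- Let V be an m-dimensional subspace of ℝⁿ, 0 < α < 1, P a (V, α)-planar subset of ℝⁿ, δ > 0, and r > 0. Then for any x ∈ ℝⁿ there is a constant C = C(α, n, m) depending only on α, n, m such that the set P(δr) ∩ B(x, r) can be covered by at most C·δ^{−m} balls of radius δr, provided 0 < δ < 1. -/
open Metric Set Filter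
open scoped RealInnerProductSpace

/-!
On a `(V, α)`-planar set the orthogonal projection onto `V` is bi-Lipschitz: it is
`1`-Lipschitz, and by Pythagoras it expands distances by at least `√(1 - α²)`. Hence an
`ε`-separated subset of `P ∩ B(x, 3r)` projects injectively to a `√(1 - α²) ε`-separated
subset of an `m`-dimensional ball of radius `3r`, and comparing volumes bounds its size by
`(6r / (√(1 - α²) ε) + 1)^m`; a maximal separated set is an `ε`-net. With `ε = δr`, every
point of `P(δr) ∩ B(x, r)` lies within `3δr` of this net, and each ball of radius `3δr` in
`ℝⁿ` is covered by `7ⁿ` balls of radius `δr`.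
-/

open scoped NNReal ENNReal
open MeasureTheory Module

theorem Set.encard_le_coe_of_forall_finset_subset {α : Type*} {s : Set α} {N : ℕ}
    (h : ∀ t : Finset α, ↑t ⊆ s → t.card ≤ N) : s.encard ≤ N := by
  by_contra! hlt
  obtain ⟨t, hts, ht⟩ := exists_subset_encard_eq (Order.add_one_le_of_lt hlt)
  have htfin : t.Finite := finite_of_encard_eq_coe (k := N + 1) (by exact_mod_cast ht)
  have hcard := h htfin.toFinset (by simpa using hts)
  rw [htfin.encard_eq_coe_toFinset_card] at ht
  norm_cast at ht
  omega

namespace Metric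

theorem coe_lt_edist_iff {X : Type*} [PseudoMetricSpace X] {x y : X} {ε : ℝ≥0} :
    (ε : ℝ≥0∞) < edist x y ↔ (ε : ℝ) < dist x y := by
  rw [← not_le, edist_le_coe, ← NNReal.coe_le_coe, coe_nndist, not_le]

theorem exists_finset_isCover_of_forall_isSeparated_encard_le {X : Type*}
    [PseudoEMetricSpace X] {ε : ℝ≥0} {A : Set X} {N : ℕ}
    (h : ∀ C ⊆ A, IsSeparated ε C → C.encard ≤ N) :
    ∃ T : Finset X, ↑T ⊆ A ∧ T.card ≤ N ∧ IsCover ε A T := by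
  have hpack : packingNumber ε A ≤ N := iSup₂_le fun C hC ↦ iSup_le (h C hC)
  have hM := h _ maximalSeparatedSet_subset isSeparated_maximalSeparatedSet
  have hfin := finite_of_encard_le_coe hM
  refine ⟨hfin.toFinset, by simpa using maximalSeparatedSet_subset, ?_, by
    simpa using isCover_maximalSeparatedSet (hpack.trans_lt (ENat.natCast_lt_top N)).ne⟩
  rwa [hfin.encard_eq_coe_toFinset_card, Nat.cast_le] at hM

theorem IsSeparated.image_of_mul_dist_le {X Y : Type*} [PseudoMetricSpace X] [MetricSpace Y]
    {f : X → Y} {C : Set X} {c ε : ℝ≥0}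
    (hf : ∀ p ∈ C, ∀ q ∈ C, c * dist p q ≤ dist (f p) (f q)) (hC : IsSeparated ε C) :
    IsSeparated (c * ε) (f '' C) := by
  rintro _ ⟨p, hp, rfl⟩ _ ⟨q, hq, rfl⟩ hne
  have hpq := coe_lt_edist_iff.1 (hC hp hq fun h ↦ hne (h ▸ rfl))
  rw [← ENNReal.coe_mul, coe_lt_edist_iff, NNReal.coe_mul]
  rcases eq_zero_or_pos c with rfl | hc
  · simpa using dist_pos.2 hne
  · exact (mul_lt_mul_of_pos_left hpq hc).trans_le (hf p hp q hq)

section FiniteDimensional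

variable {E : Type*} [NormedAddCommGroup E] [NormedSpace ℝ E] [FiniteDimensional ℝ E]

theorem card_le_of_isSeparated_of_subset_closedBall {T : Finset E} {x : E} {R : ℝ}
    {ε : ℝ≥0} (hε : 0 < ε) (hR : 0 ≤ R) (hT : ↑T ⊆ closedBall x R)
    (hsep : IsSeparated ε (T : Set E)) :
    (T.card : ℝ) ≤ (2 * R / ε + 1) ^ finrank ℝ E := by
  borelize E
  set μ : Measure E := Measure.addHaar
  set d := finrank ℝ E
  have hε₂ : (0 : ℝ) < ε / 2 := by positivity
  have hdisj : (T : Set E).PairwiseDisjoint fun t ↦ ball t (ε / 2) := by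
    intro a ha b hb hab
    have := coe_lt_edist_iff.1 (hsep ha hb hab)
    exact ball_disjoint_ball (by linarith)
  have hsub : (⋃ t ∈ T, ball t (ε / 2)) ⊆ ball x (R + ε / 2) :=
    iUnion₂_subset fun t ht ↦ ball_subset_ball' (by linarith [mem_closedBall.1 (hT ht)])
  have hvol : (T.card : ℝ≥0∞) * ENNReal.ofReal ((ε / 2) ^ d) * μ (ball 0 1) ≤
      ENNReal.ofReal ((R + ε / 2) ^ d) * μ (ball 0 1) := calc
    _ = ∑ t ∈ T, μ (ball t (ε / 2)) := by
      simp [Measure.addHaar_ball_of_pos μ _ hε₂, mul_assoc, d]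
    _ = μ (⋃ t ∈ T, ball t (ε / 2)) :=
      (measure_biUnion_finset hdisj fun _ _ ↦ measurableSet_ball).symm
    _ ≤ μ (ball x (R + ε / 2)) := measure_mono hsub
    _ = _ := Measure.addHaar_ball_of_pos μ _ (by positivity)
  replace hvol := (ENNReal.mul_le_mul_iff_left (measure_ball_pos μ 0 one_pos).ne'
    measure_ball_lt_top.ne).1 hvol
  rw [← ENNReal.ofReal_natCast, ← ENNReal.ofReal_mul (by positivity),
    ENNReal.ofReal_le_ofReal_iff (by positivity)] at hvol
  calc (T.card : ℝ) ≤ (R + ε / 2) ^ d / (ε / 2) ^ d := by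
        rwa [le_div_iff₀ (by positivity)]
    _ = _ := by rw [← div_pow]; congr 1; field_simp

theorem encard_le_of_isSeparated_of_subset_closedBall {C : Set E} {x : E} {R : ℝ}
    {ε : ℝ≥0} (hε : 0 < ε) (hR : 0 ≤ R) (hC : C ⊆ closedBall x R)
    (hsep : IsSeparated ε C) :
    C.encard ≤ ⌊(2 * R / ε + 1) ^ finrank ℝ E⌋₊ :=
  encard_le_coe_of_forall_finset_subset fun _T hT ↦ Nat.le_floor <|
    card_le_of_isSeparated_of_subset_closedBall hε hR (hT.trans hC) (hsep.subset hT)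

theorem exists_finset_isCover_of_mul_dist_le {X : Type*} [MetricSpace X] {A : Set X}
    {f : X → E} {c ε : ℝ≥0} {y : E} {R : ℝ} (hc : 0 < c) (hε : 0 < ε) (hR : 0 ≤ R)
    (hf : ∀ p ∈ A, ∀ q ∈ A, c * dist p q ≤ dist (f p) (f q))
    (hA : MapsTo f A (closedBall y R)) :
    ∃ T : Finset X, (T.card : ℝ) ≤ (2 * R / (c * ε) + 1) ^ finrank ℝ E ∧ IsCover ε A T := by
  obtain ⟨T, -, hTcard, hT⟩ := exists_finset_isCover_of_forall_isSeparated_encard_le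
    (N := ⌊(2 * R / (c * ε) + 1) ^ finrank ℝ E⌋₊) fun C hCA hC ↦ by
      have hfC : ∀ p ∈ C, ∀ q ∈ C, c * dist p q ≤ dist (f p) (f q) :=
        fun p hp q hq ↦ hf p (hCA hp) q (hCA hq)
      have hinj : InjOn f C := fun p hp q hq hpq ↦ dist_le_zero.1 <|
        (mul_le_mul_iff_right₀ (NNReal.coe_pos.2 hc)).1 (by simpa [hpq] using hfC p hp q hq)
      rw [← hinj.encard_image]
      exact_mod_cast encard_le_of_isSeparated_of_subset_closedBall (mul_pos hc hε) hR
        ((hA.mono_left hCA).image_subset) (hC.image_of_mul_dist_le hfC)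
  exact ⟨T, (Nat.cast_le.2 hTcard).trans (Nat.floor_le (by positivity)), hT⟩

theorem exists_finset_cthickening_inter_closedBall_subset {P : Set E} {T : Finset E} {x : E}
    {r : ℝ} {ε : ℝ≥0} (hε : 0 < ε) (hεr : (ε : ℝ) ≤ r)
    (hT : P ∩ closedBall x (3 * r) ⊆ ⋃ t ∈ T, closedBall t ε) :
    ∃ S : Finset E, S.card ≤ T.card * 7 ^ finrank ℝ E ∧
      cthickening ε P ∩ closedBall x r ⊆ ⋃ y ∈ S, closedBall y ε := by
  classical
  have hnet (t : E) : ∃ N : Finset E, N.card ≤ 7 ^ finrank ℝ E ∧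
      closedBall t (3 * ε) ⊆ ⋃ y ∈ N, closedBall y ε := by
    obtain ⟨N, -, hN, hcov⟩ := exists_finset_isCover_of_forall_isSeparated_encard_le
      (A := closedBall t (3 * ε)) fun C hC hsep ↦
        encard_le_of_isSeparated_of_subset_closedBall hε (by positivity) hC hsep
    have h7 : 2 * (3 * (ε : ℝ)) / ε + 1 = (7 : ℕ) := by field_simp; norm_num
    rw [h7, ← Nat.cast_pow, Nat.floor_natCast] at hN
    exact ⟨N, hN, hcov.subset_iUnion_closedBall⟩
  choose N hNcard hNcov using hnet
  refine ⟨T.biUnion N, Finset.card_biUnion_le_card_mul T N _ fun t _ ↦ hNcard t, ?_⟩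
  rintro a ⟨haP, hax⟩
  obtain ⟨p, hpP, hap⟩ := mem_thickening_iff.1 <|
    cthickening_subset_thickening' (by positivity) (lt_two_mul_self (NNReal.coe_pos.2 hε)) P haP
  have hpx : p ∈ closedBall x (3 * r) := by
    rw [mem_closedBall] at hax ⊢
    linarith [dist_triangle_left p x a]
  obtain ⟨t, ht, hpt⟩ := mem_iUnion₂.1 (hT ⟨hpP, hpx⟩)
  have hat : a ∈ closedBall t (3 * ε) := by
    rw [mem_closedBall] at hpt ⊢
    linarith [dist_triangle a p t]
  obtain ⟨y, hy, hay⟩ := mem_iUnion₂.1 (hNcov t hat)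
  exact mem_iUnion₂.2 ⟨y, Finset.mem_biUnion.2 ⟨t, ht, hy⟩, hay⟩

end FiniteDimensional

end Metric

theorem IsPlanar.mul_dist_le_dist_orthogonalProjectionOnto {n : ℕ}
    {V : Submodule ℝ (EuclideanSpace ℝ (Fin n))} {α : ℝ} {P : Set (EuclideanSpace ℝ (Fin n))}
    (hP : IsPlanar V α P) (hα : 0 ≤ α) {p q : EuclideanSpace ℝ (Fin n)} (hp : p ∈ P)
    (hq : q ∈ P) :
    √(1 - α ^ 2) * dist p q ≤
      dist (V.orthogonalProjectionOnto p) (V.orthogonalProjectionOnto q) := by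
  rw [dist_eq_norm, dist_eq_norm, ← map_sub]
  set w := p - q
  have hperp : ‖Vᗮ.orthogonalProjectionOnto w‖ ≤ α * ‖w‖ := hP q hq p hp
  have hpyth := V.norm_sq_eq_add_norm_sq_projection w
  calc √(1 - α ^ 2) * ‖w‖ = √((1 - α ^ 2) * ‖w‖ ^ 2) := by
        rw [Real.sqrt_mul' _ (by positivity), Real.sqrt_sq (norm_nonneg _)]
    _ ≤ √(‖V.orthogonalProjectionOnto w‖ ^ 2) := Real.sqrt_le_sqrt <| by
        nlinarith [mul_le_mul hperp hperp (norm_nonneg _) (by positivity)]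
    _ = ‖V.orthogonalProjectionOnto w‖ := Real.sqrt_sq (norm_nonneg _)

theorem IsPlanar.exists_finset_isCover {n m : ℕ} {V : Submodule ℝ (EuclideanSpace ℝ (Fin n))}
    (hV : finrank ℝ V = m) {α : ℝ} (hα0 : 0 ≤ α) (hα1 : α < 1)
    {P : Set (EuclideanSpace ℝ (Fin n))} (hP : IsPlanar V α P) (x : EuclideanSpace ℝ (Fin n))
    {R : ℝ} (hR : 0 ≤ R) {ε : ℝ≥0} (hε : 0 < ε) :
    ∃ T : Finset (EuclideanSpace ℝ (Fin n)),
      (T.card : ℝ) ≤ (2 * R / (√(1 - α ^ 2) * ε) + 1) ^ m ∧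
        P ∩ closedBall x R ⊆ ⋃ t ∈ T, closedBall t ε := by
  have hproj : MapsTo V.orthogonalProjectionOnto (P ∩ closedBall x R)
      (closedBall (V.orthogonalProjectionOnto x) R) := fun p hp ↦
    (V.lipschitzWith_orthogonalProjectionOnto.dist_le_mul p x).trans (by simpa using hp.2)
  obtain ⟨T, hTcard, hT⟩ := exists_finset_isCover_of_mul_dist_le
    (c := ⟨√(1 - α ^ 2), Real.sqrt_nonneg _⟩) (Real.sqrt_pos.2 (by nlinarith)) hε hR
    (fun p hp q hq ↦ hP.mul_dist_le_dist_orthogonalProjectionOnto hα0 hp.1 hq.1) hproj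
  exact ⟨T, hV ▸ hTcard, hT.subset_iUnion_closedBall⟩

/-- Covering estimate: the `(δr)`-neighbourhood of an `(m, α)`-planar set intersected
with a ball of radius `r` is covered by at most `C(α, n, m)·δ^{-m}` balls of radius `δr`. -/
theorem stmt16 (n m : ℕ) (α : ℝ) (hα0 : 0 < α) (hα1 : α < 1) :
    ∃ C : ℝ, 0 < C ∧
      ∀ V : Submodule ℝ (EuclideanSpace ℝ (Fin n)), Module.finrank ℝ V = m →
        ∀ P : Set (EuclideanSpace ℝ (Fin n)), IsPlanar V α P →
          ∀ δ r : ℝ, 0 < δ → δ < 1 → 0 < r →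
            ∀ x : EuclideanSpace ℝ (Fin n),
              ∃ S : Finset (EuclideanSpace ℝ (Fin n)),
                (S.card : ℝ) ≤ C / δ ^ m ∧
                cthickening (δ * r) P ∩ closedBall x r ⊆ ⋃ y ∈ S, closedBall y (δ * r) := by
  set c := √(1 - α ^ 2)
  have hc : 0 < c := Real.sqrt_pos.2 (by nlinarith)
  refine ⟨(6 / c + 1) ^ m * 7 ^ n, by positivity, fun V hV P hP δ r hδ0 hδ1 hr x ↦ ?_⟩
  obtain ⟨ε, hε⟩ : ∃ ε : ℝ≥0, (ε : ℝ) = δ * r := ⟨⟨δ * r, by positivity⟩, rfl⟩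
  have hεpos : 0 < ε := by rw [← NNReal.coe_pos, hε]; positivity
  obtain ⟨T, hTcard, hT⟩ :=
    hP.exists_finset_isCover hV hα0.le hα1 x (R := 3 * r) (by positivity) hεpos
  obtain ⟨S, hScard, hS⟩ := exists_finset_cthickening_inter_closedBall_subset hεpos
    (by rw [hε]; nlinarith) hT
  refine ⟨S, ?_, hε ▸ hS⟩
  rw [finrank_euclideanSpace_fin] at hScard
  have hratio : 2 * (3 * r) / (c * ε) + 1 ≤ (6 / c + 1) / δ := by
    have h : 2 * (3 * r) / (c * (δ * r)) + 1 = (6 / c + δ) / δ := by field_simp; ring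
    rw [hε, h]
    gcongr
  calc (S.card : ℝ) ≤ T.card * 7 ^ n := by exact_mod_cast hScard
    _ ≤ ((6 / c + 1) / δ) ^ m * 7 ^ n := by
      gcongr
      exact hTcard.trans (pow_le_pow_left₀ (by positivity) hratio m)
    _ = _ := by rw [div_pow]; ring
end
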